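/- arXiv:2401.12532 — 2 statements merged into one kernel-verified Lean document; each statement's English description precedes it below -/
import Mathlib

section
/- Let d ≥ 1, σ > 1, η > 0, α ≥ 1, A = 2√d·σ/(σ²−1), h(σ) = 2σ²·log σ/(σ²−1), and let g(α) = (1+α)/2·η (standard setting). Define z₊(α) = −A·g(α) + √((A/σ)²·g(α)² + h(σ)/σ²) and z₋(α) = (A/σ)·g(α) − √(A²·g(α)² + h(σ)). Then the disparity D(α) = Φ(z₊(α)) − Φ(z₋(α)) is strictly positive and strictly monotonically decreasing in α. -/
open Real Set

/-- Standard normal cumulative distribution function. -/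
noncomputable def stdNormalCDF (z : ℝ) : ℝ :=
  ∫ t in Set.Iic z, (Real.sqrt (2 * Real.pi))⁻¹ * Real.exp (-t ^ 2 / 2)

noncomputable def gaussPDF (t : ℝ) : ℝ :=
  (Real.sqrt (2 * Real.pi))⁻¹ * Real.exp (-t ^ 2 / 2)

lemma gaussPDF_pos (t : ℝ) : 0 < gaussPDF t := by
  unfold gaussPDF
  have h2π : (0:ℝ) < 2 * Real.pi := by positivity
  exact mul_pos (inv_pos.mpr (Real.sqrt_pos.mpr h2π)) (Real.exp_pos _)

lemma gaussPDF_cont : Continuous gaussPDF := by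
  unfold gaussPDF
  fun_prop

lemma gaussPDF_integrable : MeasureTheory.Integrable gaussPDF := by
  have h : MeasureTheory.Integrable (fun x : ℝ => Real.exp (-(1/2 : ℝ) * x ^ 2)) :=
    integrable_exp_neg_mul_sq (by norm_num)
  have h2 := h.const_mul (Real.sqrt (2 * Real.pi))⁻¹
  have heq : (fun x : ℝ => (Real.sqrt (2 * Real.pi))⁻¹ * Real.exp (-(1/2 : ℝ) * x ^ 2)) =
      gaussPDF := by
    funext x
    unfold gaussPDF
    ring_nf
  exact heq ▸ h2

lemma stdNormalCDF_sub (a b : ℝ) :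
    stdNormalCDF b - stdNormalCDF a = ∫ t in a..b, gaussPDF t := by
  unfold stdNormalCDF
  exact intervalIntegral.integral_Iic_sub_Iic
    (gaussPDF_integrable.integrableOn) (gaussPDF_integrable.integrableOn)

lemma stdNormalCDF_strictMono : StrictMono stdNormalCDF := by
  intro a b hab
  have hsub := stdNormalCDF_sub a b
  have hpos : 0 < ∫ t in a..b, gaussPDF t :=
    intervalIntegral.intervalIntegral_pos_of_pos
      (gaussPDF_integrable.intervalIntegrable) gaussPDF_pos hab
  linarith

lemma hasDerivAt_stdNormalCDF (z : ℝ) : HasDerivAt stdNormalCDF (gaussPDF z) z := by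
  have key : stdNormalCDF = fun w => stdNormalCDF 0 + ∫ t in (0:ℝ)..w, gaussPDF t := by
    funext w
    have := stdNormalCDF_sub 0 w
    linarith
  rw [key]
  refine HasDerivAt.const_add _ ?_
  exact intervalIntegral.integral_hasDerivAt_right
    (gaussPDF_integrable.intervalIntegrable)
    (gaussPDF_cont.stronglyMeasurable.stronglyMeasurableAtFilter)
    gaussPDF_cont.continuousAt

lemma G_strictMono {c : ℝ} (hc : 0 < c) :
    StrictMono (fun u => stdNormalCDF u - stdNormalCDF (-Real.sqrt (u ^ 2 + c))) := by
  apply strictMono_of_hasDerivAt_pos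
    (f' := fun u => gaussPDF u -
      gaussPDF (-Real.sqrt (u ^ 2 + c)) * (-(1 / (2 * Real.sqrt (u ^ 2 + c)) * (2 * u))))
  · intro u
    have hpos : (0:ℝ) < u ^ 2 + c := by positivity
    have hsq : HasDerivAt (fun u : ℝ => u ^ 2 + c) (2 * u) u := by
      simpa using (hasDerivAt_pow 2 u).add_const c
    have hsqrt : HasDerivAt (fun u : ℝ => Real.sqrt (u ^ 2 + c))
        (1 / (2 * Real.sqrt (u ^ 2 + c)) * (2 * u)) u :=
      (Real.hasDerivAt_sqrt hpos.ne').comp u hsq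
    have h2 : HasDerivAt (fun u : ℝ => stdNormalCDF (-Real.sqrt (u ^ 2 + c)))
        (gaussPDF (-Real.sqrt (u ^ 2 + c)) * (-(1 / (2 * Real.sqrt (u ^ 2 + c)) * (2 * u)))) u :=
      (hasDerivAt_stdNormalCDF _).comp u hsqrt.neg
    exact (hasDerivAt_stdNormalCDF u).sub h2
  · intro u
    set s := Real.sqrt (u ^ 2 + c) with hs
    have hpos : (0:ℝ) < u ^ 2 + c := by positivity
    have hs0 : 0 < s := Real.sqrt_pos.mpr hpos
    have hs2 : s ^ 2 = u ^ 2 + c := Real.sq_sqrt hpos.le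
    have habs : |u| < s := by
      rw [← Real.sqrt_sq_eq_abs]
      exact Real.sqrt_lt_sqrt (sq_nonneg u) (by linarith)
    -- gaussPDF (-s) = gaussPDF u * exp (-c/2)
    have hgauss : gaussPDF (-s) = gaussPDF u * Real.exp (-c / 2) := by
      unfold gaussPDF
      rw [mul_assoc, ← Real.exp_add, neg_sq, hs2]
      ring_nf
    have hexp1 : Real.exp (-c / 2) ≤ 1 := by
      rw [Real.exp_le_one_iff]; linarith
    have hexp0 : 0 < Real.exp (-c / 2) := Real.exp_pos _
    have hgu : 0 < gaussPDF u := gaussPDF_pos u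
    rw [hgauss]
    have hu1 : -|u| ≤ u := neg_abs_le u
    have hlt2 : -s < Real.exp (-c/2) * u := by
      nlinarith [abs_nonneg u]
    have heq : gaussPDF u - gaussPDF u * Real.exp (-c/2) * (-(1 / (2 * s) * (2 * u))) =
        gaussPDF u * (s + Real.exp (-c/2) * u) / s := by
      field_simp
      ring
    rw [heq]
    exact div_pos (mul_pos hgu (by linarith)) hs0
  
set_option maxHeartbeats 1000000 in
theorem stmt2 (d : ℕ) (σ η : ℝ) (hd : 1 ≤ d) (hσ : 1 < σ) (hη : 0 < η)
    (A h : ℝ) (hA : A = 2 * Real.sqrt d * σ / (σ ^ 2 - 1))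
    (hh : h = 2 * σ ^ 2 * Real.log σ / (σ ^ 2 - 1))
    (g zp zm D : ℝ → ℝ)
    (hg : ∀ α, g α = (1 + α) / 2 * η)
    (hzp : ∀ α, zp α = -A * g α + Real.sqrt ((A / σ) ^ 2 * (g α) ^ 2 + h / σ ^ 2))
    (hzm : ∀ α, zm α = (A / σ) * g α - Real.sqrt (A ^ 2 * (g α) ^ 2 + h))
    (hD : ∀ α, D α = stdNormalCDF (zp α) - stdNormalCDF (zm α)) :
    (∀ α ∈ Set.Ici (1 : ℝ), 0 < D α) ∧ StrictAntiOn D (Set.Ici (1 : ℝ)) := by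
  have hσ0 : (0:ℝ) < σ := by linarith
  have hσ21 : (0:ℝ) < σ ^ 2 - 1 := by nlinarith
  have hd0 : (0:ℝ) < Real.sqrt d := Real.sqrt_pos.mpr (by exact_mod_cast Nat.lt_of_lt_of_le Nat.zero_lt_one hd)
  have hA0 : 0 < A := by rw [hA]; positivity
  have hlog : 0 < Real.log σ := Real.log_pos hσ
  have hh0 : 0 < h := by rw [hh]; positivity
  set c := 2 * Real.log σ with hc_def
  have hc : 0 < c := by positivity
  -- basic facts for α ≥ 1
  have ht : ∀ α ∈ Set.Ici (1:ℝ), 0 < g α := by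
    intro α hα
    rw [hg]
    have : (1:ℝ) ≤ α := hα
    nlinarith
  have ht0 : ∀ α ∈ Set.Ici (1:ℝ), 0 ≤ g α := fun α hα => (ht α hα).le
  have hzp' : ∀ α, zp α = -A * g α + Real.sqrt (A ^ 2 * (g α) ^ 2 + h) / σ := by
    intro α
    rw [hzp]
    congr 1
    rw [show (A / σ) ^ 2 * (g α) ^ 2 + h / σ ^ 2 = (A ^ 2 * (g α) ^ 2 + h) / σ ^ 2 by
      field_simp,
      Real.sqrt_div (by nlinarith [sq_nonneg (A * g α)]), Real.sqrt_sq hσ0.le]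
  -- s bounds
  have hsb : ∀ α ∈ Set.Ici (1:ℝ), A * g α < Real.sqrt (A ^ 2 * (g α) ^ 2 + h) := by
    intro α hα
    have h1 : 0 ≤ A * g α := mul_nonneg hA0.le (ht0 α hα)
    rw [show A ^ 2 * (g α) ^ 2 = (A * g α) ^ 2 by ring]
    nlinarith [Real.sq_sqrt (show (0:ℝ) ≤ (A * g α) ^ 2 + h by nlinarith [sq_nonneg (A * g α)]),
      Real.sqrt_nonneg ((A * g α) ^ 2 + h),
      Real.sqrt_lt_sqrt (sq_nonneg (A * g α)) (show (A * g α) ^ 2 < (A * g α) ^ 2 + h by linarith),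
      Real.sqrt_sq h1]
  -- zm is negative
  have hzm_neg : ∀ α ∈ Set.Ici (1:ℝ), zm α < 0 := by
    intro α hα
    rw [hzm]
    have hs := hsb α hα
    have hg0 := ht α hα
    have : A / σ * g α ≤ A * g α := by
      rw [div_mul_eq_mul_div, div_le_iff₀ hσ0]
      nlinarith [mul_nonneg hA0.le hg0.le]
    linarith
  -- key identity : zm² = zp² + c
  have hiden : ∀ α ∈ Set.Ici (1:ℝ), (zm α) ^ 2 = (zp α) ^ 2 + c := by
    intro α hα
    rw [hzm, hzp' α]
    set s := Real.sqrt (A ^ 2 * (g α) ^ 2 + h) with hs_def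
    have hs2 : s ^ 2 = A ^ 2 * (g α) ^ 2 + h := Real.sq_sqrt (by nlinarith [sq_nonneg (A * g α)])
    have hch : c = h * (σ ^ 2 - 1) / σ ^ 2 := by
      rw [hh, hc_def]; field_simp
    have expand : (A / σ * g α - s) ^ 2 - (-A * g α + s / σ) ^ 2 =
        (s ^ 2 - A ^ 2 * (g α) ^ 2) * (σ ^ 2 - 1) / σ ^ 2 := by
      field_simp; ring
    rw [hs2] at expand
    have : (A / σ * g α - s) ^ 2 - (-A * g α + s / σ) ^ 2 = c := by
      rw [expand, hch]; ring
    linarith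
  -- hence zm α = -√(zp α ^ 2 + c)
  have hzm_eq : ∀ α ∈ Set.Ici (1:ℝ), zm α = -Real.sqrt ((zp α) ^ 2 + c) := by
    intro α hα
    rw [← hiden α hα, Real.sqrt_sq_eq_abs, abs_of_neg (hzm_neg α hα), neg_neg]
  -- zm < zp
  have hlt : ∀ α ∈ Set.Ici (1:ℝ), zm α < zp α := by
    intro α hα
    rw [hzm_eq α hα]
    have h1 : |zp α| < Real.sqrt ((zp α) ^ 2 + c) := by
      rw [← Real.sqrt_sq_eq_abs]
      exact Real.sqrt_lt_sqrt (sq_nonneg _) (by linarith)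
    have := neg_abs_le (zp α)
    linarith
  -- zp strictly decreasing on Ici 1
  have hzp_anti : ∀ α ∈ Set.Ici (1:ℝ), ∀ β ∈ Set.Ici (1:ℝ), α < β → zp β < zp α := by
    intro α hα β hβ hαβ
    rw [hzp' α, hzp' β]
    set t1 := g α
    set t2 := g β
    have htt : t1 < t2 := by
      simp only [t1, t2, hg]
      nlinarith
    have ht1 : 0 < t1 := ht α hα
    set s1 := Real.sqrt (A ^ 2 * t1 ^ 2 + h) with hs1_def
    set s2 := Real.sqrt (A ^ 2 * t2 ^ 2 + h) with hs2_def
    have hs1sq : s1 ^ 2 = A ^ 2 * t1 ^ 2 + h := Real.sq_sqrt (by nlinarith [sq_nonneg (A * t1)])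
    have hs2sq : s2 ^ 2 = A ^ 2 * t2 ^ 2 + h := Real.sq_sqrt (by nlinarith [sq_nonneg (A * t2)])
    have hb1 : A * t1 < s1 := hsb α hα
    have hb2 : A * t2 < s2 := hsb β hβ
    have ht2 : 0 < t2 := by linarith
    have hAt : 0 < A * (t2 - t1) := mul_pos hA0 (by linarith)
    have hsumpos : 0 < s1 + s2 := by
      have := mul_pos hA0 ht1
      have := mul_pos hA0 ht2
      linarith
    -- s2 - s1 < A * (t2 - t1)
    have hdiff : s2 - s1 < A * (t2 - t1) := by
      have h1 : (s2 - s1) * (s1 + s2) = A * (t2 - t1) * (A * (t1 + t2)) := by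
        linear_combination hs2sq - hs1sq
      have h2 : A * (t2 - t1) * (A * (t1 + t2)) < A * (t2 - t1) * (s1 + s2) := by
        apply mul_lt_mul_of_pos_left _ hAt
        linarith
      exact lt_of_mul_lt_mul_right (by linarith) hsumpos.le
    have h12 : s1 < s2 := by
      have h1 : (s2 - s1) * (s1 + s2) = A * (t2 - t1) * (A * (t1 + t2)) := by
        linear_combination hs2sq - hs1sq
      nlinarith [mul_pos hAt (mul_pos hA0 (show 0 < t1 + t2 by linarith)), hsumpos, h1]
    have hq : (s2 - s1) / σ ≤ s2 - s1 := by
      rw [div_le_iff₀ hσ0]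
      nlinarith [mul_nonneg (sub_nonneg.mpr h12.le) (show (0:ℝ) ≤ σ - 1 by linarith)]
    have hring : s2 / σ - s1 / σ = (s2 - s1) / σ := by ring
    linarith
  -- assemble
  have hDG : ∀ α ∈ Set.Ici (1:ℝ), D α =
      stdNormalCDF (zp α) - stdNormalCDF (-Real.sqrt ((zp α) ^ 2 + c)) := by
    intro α hα
    rw [hD, hzm_eq α hα]
  constructor
  · intro α hα
    rw [hD]
    have := stdNormalCDF_strictMono (hlt α hα)
    linarith
  · intro α hα β hβ hαβ
    rw [hDG α hα, hDG β hβ]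
    exact G_strictMono hc (hzp_anti α hα β hβ hαβ)
end

section
/- Suppose d·g(α)² is sufficiently large relative to σ (precisely, 4·d·g(α)²·(σ−1) > 2σ(σ+1)·log σ for all α in the range considered), with σ > 1, η > 0, A = 2√d·σ/(σ²−1), h(σ) = 2σ²·log σ/(σ²−1), and g(α) = (1+α)/2·η − ε with 0 < ε < η. Then the disparity function D(α) = Φ(z₊(α)) − Φ(z₋(α)), with z₊(α) = −A·g(α) + √((A/σ)²g(α)² + h(σ)/σ²) and z₋(α) = (A/σ)g(α) − √(A²g(α)² + h(σ)), is strictly convex in α. -/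
open Real Set

/-!
With `a = A g(α)`, which is an injective affine function of `α`, the disparity is
`F(a) = Φ(z₊(a)) - Φ(z₋(a))` with `z₊ = -a + √(a² + h)/σ` and `z₋ = a/σ - √(a² + h)`,
and the separation hypothesis keeps `a` in the region `σ a > √(a² + h)`. There
`z₋ < z₊ < 0`, so `φ(z₋) < φ(z₊)`. Writing `F'' = φ(z₊) B₊ - φ(z₋) B₋` with
`B = z'' - z z'²`, the sign of `z₊` gives `B₊ > 0`, and `B₊ - B₋` factors into positive
terms; hence `F'' = (φ(z₊) - φ(z₋)) B₊ + φ(z₋) (B₊ - B₋) > 0`.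
-/

open MeasureTheory ProbabilityTheory

theorem StrictConvexOn.comp_affineMap {E F : Type*} [AddCommGroup E] [Module ℝ E]
    [AddCommGroup F] [Module ℝ F] {f : F → ℝ} {s : Set F} (hf : StrictConvexOn ℝ s f)
    (g : E →ᵃ[ℝ] F) (hg : Function.Injective g) : StrictConvexOn ℝ (g ⁻¹' s) (f ∘ g) :=
  ⟨hf.1.affine_preimage g, fun x hx y hy hxy a b ha hb hab => by
    simpa only [Function.comp_apply, Convex.combo_affine_apply hab]
      using hf.2 hx hy (hg.ne hxy) ha hb hab⟩

lemma gaussianPDFReal_zero_one (x : ℝ) :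
    gaussianPDFReal 0 1 x = (√(2 * π))⁻¹ * exp (-x ^ 2 / 2) := by
  simp [gaussianPDFReal]

lemma stdNormalCDF_eq_integral (x : ℝ) :
    stdNormalCDF x = ∫ t in Iic x, gaussianPDFReal 0 1 t := by
  simp only [stdNormalCDF, gaussianPDFReal_zero_one]

lemma hasDerivAt_stdNormalCDF_s12 (x : ℝ) : HasDerivAt stdNormalCDF (gaussianPDFReal 0 1 x) x := by
  have hint := integrable_gaussianPDFReal 0 1
  have hcont : Continuous (gaussianPDFReal 0 1) := by
    simp only [gaussianPDFReal_def]; fun_prop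
  have hFTC : stdNormalCDF =
      fun y => stdNormalCDF 0 + ∫ t in (0 : ℝ)..y, gaussianPDFReal 0 1 t := by
    funext y
    rw [stdNormalCDF_eq_integral, stdNormalCDF_eq_integral,
      ← intervalIntegral.integral_Iic_sub_Iic hint.integrableOn hint.integrableOn]
    ring
  rw [hFTC]
  exact (intervalIntegral.integral_hasDerivAt_right hint.intervalIntegrable
    (hcont.stronglyMeasurableAtFilter _ _) hcont.continuousAt).const_add _

lemma hasDerivAt_gaussianPDFReal_zero_one (x : ℝ) :
    HasDerivAt (gaussianPDFReal 0 1) (-x * gaussianPDFReal 0 1 x) x := by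
  simp only [funext gaussianPDFReal_zero_one]
  refine (((hasDerivAt_pow 2 x).neg.div_const 2).exp.const_mul _).congr_deriv ?_
  simp only [Pi.neg_apply, Nat.cast_ofNat, Nat.add_one_sub_one, pow_one]
  ring

lemma strictMonoOn_gaussianPDFReal_zero_one : StrictMonoOn (gaussianPDFReal 0 1) (Iic 0) := by
  intro x _ y hy hxy
  simp only [gaussianPDFReal_zero_one]
  have hsq : y ^ 2 < x ^ 2 := by nlinarith [mem_Iic.1 hy]
  gcongr _ * exp ?_
  linarith

lemma HasDerivAt.gaussianPDFReal_comp_mul {z z' : ℝ → ℝ} {z'' x : ℝ}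
    (hz : HasDerivAt z (z' x) x) (hz' : HasDerivAt z' z'' x) :
    HasDerivAt (fun y => gaussianPDFReal 0 1 (z y) * z' y)
      (gaussianPDFReal 0 1 (z x) * (z'' - z x * z' x ^ 2)) x :=
  (((hasDerivAt_gaussianPDFReal_zero_one (z x)).comp x hz).mul hz').congr_deriv (by
    simp only [Function.comp_apply]; ring)

variable {σ h : ℝ}

lemma hasDerivAt_sqrt_sq_add (hh : 0 < h) (a : ℝ) :
    HasDerivAt (fun a => √(a ^ 2 + h)) (a / √(a ^ 2 + h)) a := by
  have hpos : a ^ 2 + h ≠ 0 := by positivity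
  exact (((hasDerivAt_pow 2 a).add_const h).sqrt hpos).congr_deriv (by field_simp; ring)

lemma hasDerivAt_div_sqrt_sq_add (hh : 0 < h) (a : ℝ) :
    HasDerivAt (fun a => a / √(a ^ 2 + h)) (h / √(a ^ 2 + h) ^ 3) a := by
  have hs : 0 < √(a ^ 2 + h) := sqrt_pos.2 (by positivity)
  have hsq : √(a ^ 2 + h) ^ 2 = a ^ 2 + h := sq_sqrt (by positivity)
  refine ((hasDerivAt_id a).div (hasDerivAt_sqrt_sq_add hh a) hs.ne').congr_deriv ?_
  field_simp
  simp only [id]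
  linear_combination hsq

variable (σ h) in
noncomputable def zPlus (a : ℝ) : ℝ := -a + √(a ^ 2 + h) / σ

variable (σ h) in
noncomputable def zMinus (a : ℝ) : ℝ := a / σ - √(a ^ 2 + h)

variable (σ h) in
noncomputable def disparity (a : ℝ) : ℝ :=
  stdNormalCDF (zPlus σ h a) - stdNormalCDF (zMinus σ h a)

lemma hasDerivAt_zPlus (hh : 0 < h) (a : ℝ) :
    HasDerivAt (zPlus σ h) (-1 + a / √(a ^ 2 + h) / σ) a :=
  ((hasDerivAt_id a).neg.add ((hasDerivAt_sqrt_sq_add hh a).div_const σ)).congr_deriv (by simp)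

lemma hasDerivAt_zMinus (hh : 0 < h) (a : ℝ) :
    HasDerivAt (zMinus σ h) (1 / σ - a / √(a ^ 2 + h)) a :=
  (((hasDerivAt_id a).div_const σ).sub (hasDerivAt_sqrt_sq_add hh a)).congr_deriv (by simp)

lemma hasDerivAt_deriv_zPlus (hh : 0 < h) (a : ℝ) :
    HasDerivAt (fun a => -1 + a / √(a ^ 2 + h) / σ) (h / √(a ^ 2 + h) ^ 3 / σ) a :=
  ((hasDerivAt_div_sqrt_sq_add hh a).div_const σ).const_add _

lemma hasDerivAt_deriv_zMinus (hh : 0 < h) (a : ℝ) :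
    HasDerivAt (fun a => 1 / σ - a / √(a ^ 2 + h)) (-(h / √(a ^ 2 + h) ^ 3)) a :=
  (hasDerivAt_div_sqrt_sq_add hh a).const_sub _

lemma hasDerivAt_disparity (hh : 0 < h) (a : ℝ) :
    HasDerivAt (disparity σ h)
      (gaussianPDFReal 0 1 (zPlus σ h a) * (-1 + a / √(a ^ 2 + h) / σ)
        - gaussianPDFReal 0 1 (zMinus σ h a) * (1 / σ - a / √(a ^ 2 + h))) a :=
  ((hasDerivAt_stdNormalCDF_s12 _).comp a (hasDerivAt_zPlus hh a)).sub
    ((hasDerivAt_stdNormalCDF_s12 _).comp a (hasDerivAt_zMinus hh a))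

lemma deriv2_disparity (hh : 0 < h) (a : ℝ) :
    deriv^[2] (disparity σ h) a =
      gaussianPDFReal 0 1 (zPlus σ h a) * (h / √(a ^ 2 + h) ^ 3 / σ
          - zPlus σ h a * (-1 + a / √(a ^ 2 + h) / σ) ^ 2)
        - gaussianPDFReal 0 1 (zMinus σ h a) * (-(h / √(a ^ 2 + h) ^ 3)
          - zMinus σ h a * (1 / σ - a / √(a ^ 2 + h)) ^ 2) := by
  rw [Function.iterate_succ_apply, Function.iterate_one,
    funext fun b => (hasDerivAt_disparity (σ := σ) hh b).deriv]
  exact (((hasDerivAt_zPlus hh a).gaussianPDFReal_comp_mul (hasDerivAt_deriv_zPlus hh a)).sub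
    ((hasDerivAt_zMinus hh a).gaussianPDFReal_comp_mul (hasDerivAt_deriv_zMinus hh a))).deriv

lemma disparity_curvature_pos {σ a s pp pm : ℝ} (ha : 0 < a) (has : a < s) (hsa : s < σ * a)
    (hpm : 0 < pm) (hppm : pm < pp) :
    0 < pp * ((s ^ 2 - a ^ 2) / s ^ 3 / σ - (-a + s / σ) * (-1 + a / s / σ) ^ 2)
      - pm * (-((s ^ 2 - a ^ 2) / s ^ 3) - (a / σ - s) * (1 / σ - a / s) ^ 2) := by
  have hσ : 1 < σ := by nlinarith
  have hs : 0 < s := ha.trans has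
  have hzp : -a + s / σ < 0 := by
    rw [neg_add_lt_iff_lt_add, add_zero, div_lt_iff₀ (by linarith)]
    linarith
  set Bp := (s ^ 2 - a ^ 2) / s ^ 3 / σ - (-a + s / σ) * (-1 + a / s / σ) ^ 2
  set Bm := -((s ^ 2 - a ^ 2) / s ^ 3) - (a / σ - s) * (1 / σ - a / s) ^ 2
  have hBp : 0 < Bp := by
    have : 0 < (s ^ 2 - a ^ 2) / s ^ 3 / σ := by
      have : 0 < s ^ 2 - a ^ 2 := by nlinarith
      positivity
    nlinarith [sq_nonneg (-1 + a / s / σ)]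
  have hgap : Bp - Bm = (σ + 1) / σ * (s - a) *
      ((s + a) / s ^ 3 + (σ * a - s) * (σ * s - a) / (σ ^ 2 * s ^ 2)) := by
    simp only [Bp, Bm]
    field_simp
    ring
  have hBm : Bm < Bp := by
    have : 0 < (σ * a - s) * (σ * s - a) / (σ ^ 2 * s ^ 2) := by
      have : 0 < σ * a - s := by linarith
      have : 0 < σ * s - a := by nlinarith
      positivity
    have : 0 < Bp - Bm := by
      rw [hgap]
      have : 0 < s - a := by linarith
      positivity
    linarith
  nlinarith [mul_pos (sub_pos.2 hppm) hBp, mul_pos hpm (sub_pos.2 hBm)]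

theorem strictConvexOn_disparity (hσ : 1 < σ) (hh : 0 < h) :
    StrictConvexOn ℝ (Ioi √(h / (σ ^ 2 - 1))) (disparity σ h) := by
  refine strictConvexOn_of_deriv2_pos (convex_Ioi _)
    (fun a _ => (hasDerivAt_disparity hh a).continuousAt.continuousWithinAt) fun a ha => ?_
  rw [interior_Ioi, mem_Ioi] at ha
  rw [deriv2_disparity hh]
  have ha0 : 0 < a := (sqrt_nonneg _).trans_lt ha
  have hsq : √(a ^ 2 + h) ^ 2 = a ^ 2 + h := sq_sqrt (by positivity)
  have hsa : √(a ^ 2 + h) < σ * a := by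
    have := (sqrt_lt' ha0).1 ha
    rw [div_lt_iff₀ (by nlinarith)] at this
    rw [sqrt_lt' (by positivity)]
    nlinarith
  have has : a < √(a ^ 2 + h) := lt_sqrt_of_sq_lt (by linarith)
  have hzp : zPlus σ h a < 0 := by
    rw [zPlus, neg_add_lt_iff_lt_add, add_zero, div_lt_iff₀ (by linarith)]
    linarith
  have hzm : zMinus σ h a < zPlus σ h a := by
    have : a / σ < √(a ^ 2 + h) / σ := div_lt_div_of_pos_right has (by linarith)
    rw [zPlus, zMinus]
    linarith
  have hpdf := strictMonoOn_gaussianPDFReal_zero_one (hzm.trans hzp).le hzp.le hzm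
  have hpm := gaussianPDFReal_pos 0 1 (zMinus σ h a) one_ne_zero
  unfold zPlus zMinus at hpdf hpm ⊢
  generalize √(a ^ 2 + h) = s at *
  obtain rfl : h = s ^ 2 - a ^ 2 := by linarith
  exact disparity_curvature_pos ha0 has hsa hpm hpdf

lemma disparity_mul_eq (hσ : 0 < σ) (A x : ℝ) :
    disparity σ h (A * x) = stdNormalCDF (-A * x + √((A / σ) ^ 2 * x ^ 2 + h / σ ^ 2))
      - stdNormalCDF (A / σ * x - √(A ^ 2 * x ^ 2 + h)) := by
  have hsqrt : √((A / σ) ^ 2 * x ^ 2 + h / σ ^ 2) = √((A * x) ^ 2 + h) / σ := by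
    rw [← sqrt_sq hσ.le, ← sqrt_div' _ (sq_nonneg σ), sqrt_sq hσ.le]
    congr 1
    field_simp
  rw [disparity, zPlus, zMinus, hsqrt]
  ring_nf

lemma mul_mem_Ioi_sqrt_of_separation {d σ x : ℝ} (hσ : 1 < σ) (hd : 0 < d) (hx : 0 < x)
    (hsep : 2 * σ * (σ + 1) * log σ < 4 * d * x ^ 2 * (σ - 1)) :
    2 * √d * σ / (σ ^ 2 - 1) * x ∈
      Ioi √(2 * σ ^ 2 * log σ / (σ ^ 2 - 1) / (σ ^ 2 - 1)) := by
  have hσ2 : 0 < σ ^ 2 - 1 := by nlinarith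
  have hlog : 0 < log σ := log_pos hσ
  have hgap : 0 < 4 * d * x ^ 2 - 2 * log σ := by nlinarith
  have hsq : (2 * √d * σ / (σ ^ 2 - 1) * x) ^ 2
      - 2 * σ ^ 2 * log σ / (σ ^ 2 - 1) / (σ ^ 2 - 1) =
      σ ^ 2 * (4 * d * x ^ 2 - 2 * log σ) / (σ ^ 2 - 1) ^ 2 := by
    field_simp
    rw [sq_sqrt hd.le]
    ring
  rw [mem_Ioi, sqrt_lt' (by positivity), ← sub_pos, hsq]
  positivity

theorem stmt12_general (d : ℕ) (σ η ε : ℝ) (hd : 1 ≤ d) (hσ : 1 < σ) (hη : 0 < η)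
    (hεη : ε < η)
    (A h : ℝ) (hA : A = 2 * Real.sqrt d * σ / (σ ^ 2 - 1))
    (hh : h = 2 * σ ^ 2 * Real.log σ / (σ ^ 2 - 1))
    (g zp zm D : ℝ → ℝ)
    (hg : ∀ α, g α = (1 + α) / 2 * η - ε)
    (hsep : ∀ α ∈ Set.Ici (1 : ℝ),
      4 * d * (g α) ^ 2 * (σ - 1) > 2 * σ * (σ + 1) * Real.log σ)
    (hzp : ∀ α, zp α = -A * g α + Real.sqrt ((A / σ) ^ 2 * (g α) ^ 2 + h / σ ^ 2))
    (hzm : ∀ α, zm α = (A / σ) * g α - Real.sqrt (A ^ 2 * (g α) ^ 2 + h))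
    (hD : ∀ α, D α = stdNormalCDF (zp α) - stdNormalCDF (zm α)) :
    StrictConvexOn ℝ (Set.Ici (1 : ℝ)) D := by
  have hd0 : (0 : ℝ) < d := by exact_mod_cast hd
  have hh0 : 0 < h := by
    have : 0 < σ ^ 2 - 1 := by nlinarith
    rw [hh]; have := log_pos hσ; positivity
  have hA0 : 0 < A := by
    have : 0 < σ ^ 2 - 1 := by nlinarith
    rw [hA]; positivity
  let ℓ : ℝ →ᵃ[ℝ] ℝ :=
    (A * η / 2) • AffineMap.id ℝ ℝ + AffineMap.const ℝ ℝ (A * (η / 2 - ε))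
  have hℓ : ∀ α, ℓ α = A * g α := fun α => by
    simp only [AffineMap.coe_add, AffineMap.coe_smul, AffineMap.coe_id, AffineMap.coe_const,
      Pi.add_apply, Pi.smul_apply, id_eq, smul_eq_mul, Function.const_apply, hg, ℓ]
    ring
  have hℓ_inj : Function.Injective ℓ := fun x y hxy => by
    have : A * η / 2 * (x - y) = 0 := by
      rw [hℓ, hℓ, hg, hg] at hxy
      linear_combination hxy
    simpa [sub_eq_zero, hA0.ne', hη.ne'] using this
  have hD_eq : D = disparity σ h ∘ ℓ := funext fun α => by
    rw [hD, hzp, hzm, Function.comp_apply, hℓ, disparity_mul_eq (by linarith)]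
  rw [hD_eq]
  refine ((strictConvexOn_disparity hσ hh0).comp_affineMap ℓ hℓ_inj).subset
    (fun α hα => ?_) (convex_Ici 1)
  have hgα : 0 < g α := by
    rw [hg]
    nlinarith [mem_Ici.1 hα]
  rw [mem_preimage, hℓ, hA, hh]
  exact mul_mem_Ioi_sqrt_of_separation hσ hd0 hgα (hsep α hα)

theorem stmt12 (d : ℕ) (σ η ε : ℝ) (hd : 1 ≤ d) (hσ : 1 < σ) (hη : 0 < η)
    (hε0 : 0 < ε) (hεη : ε < η)
    (A h : ℝ) (hA : A = 2 * Real.sqrt d * σ / (σ ^ 2 - 1))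
    (hh : h = 2 * σ ^ 2 * Real.log σ / (σ ^ 2 - 1))
    (g zp zm D : ℝ → ℝ)
    (hg : ∀ α, g α = (1 + α) / 2 * η - ε)
    (hsep : ∀ α ∈ Set.Ici (1 : ℝ),
      4 * d * (g α) ^ 2 * (σ - 1) > 2 * σ * (σ + 1) * Real.log σ)
    (hzp : ∀ α, zp α = -A * g α + Real.sqrt ((A / σ) ^ 2 * (g α) ^ 2 + h / σ ^ 2))
    (hzm : ∀ α, zm α = (A / σ) * g α - Real.sqrt (A ^ 2 * (g α) ^ 2 + h))
    (hD : ∀ α, D α = stdNormalCDF (zp α) - stdNormalCDF (zm α)) :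
    StrictConvexOn ℝ (Set.Ici (1 : ℝ)) D :=
  stmt12_general d σ η ε hd hσ hη hεη A h hA hh g zp zm D hg hsep hzp hzm hD
end
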